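/- arXiv:2002.08924 — 9 statements merged into one kernel-verified Lean document; each statement's English description precedes it below -/
import Mathlib

section
/- For a local rule f: {0,1,2}^3 → {0,1,2} with global map F acting on periodic configurations (circular sequences) of any length L ≥ 3 by (F(x))_i = f(x_{i-1}, x_i, x_{i+1}) (indices mod L), and a weight function Ψ: {0,1,2} → ℤ, the quantity ∑_{i=0}^{L-1} Ψ(x_i) is conserved by F for all L and all x if and only if for all x_0, x_1, x_2 ∈ {0,1,2}: Ψ(f(x_0,x_1,x_2)) - Ψ(x_0) = Ψ(f(0,0,x_1)) + Ψ(f(0,x_1,x_2)) - Ψ(f(0,0,x_0)) - Ψ(f(0,x_0,x_1)). -/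
instance (n : ℕ) : NeZero (n + 3) := ⟨by omega⟩

abbrev Rule3 := Fin 3 → Fin 3 → Fin 3 → Fin 3
abbrev Rule2 := Fin 2 → Fin 2 → Fin 2 → Fin 2

/-- Global map of a ternary nearest-neighbour CA on cyclic configurations. -/
def glob3 {n : ℕ} (f : Rule3) (x : ZMod n → Fin 3) : ZMod n → Fin 3 :=
  fun i => f (x (i - 1)) (x i) (x (i + 1))

/-- Global map of a binary (elementary) CA on cyclic configurations. -/
def glob2 {n : ℕ} (g : Rule2) (x : ZMod n → Fin 2) : ZMod n → Fin 2 :=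
  fun i => g (x (i - 1)) (x i) (x (i + 1))

/-- `f` conserves the additive quantity with weight `Ψ` on all cyclic
configurations of all lengths `L ≥ 3`. -/
def conserves3 (f : Rule3) (Ψ : Fin 3 → ℤ) : Prop :=
  ∀ L : ℕ, ∀ x : ZMod (L + 3) → Fin 3,
    (∑ i, Ψ (glob3 f x i)) = ∑ i, Ψ (x i)

def Ψ0 : Fin 3 → ℤ := fun x => (1 - (x.val : ℤ)) * (2 - (x.val : ℤ)) / 2
def Ψ1 : Fin 3 → ℤ := fun x => (x.val : ℤ) * (2 - (x.val : ℤ))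
def Ψ2 : Fin 3 → ℤ := fun x => (x.val : ℤ) * ((x.val : ℤ) - 1) / 2
def Ψs : Fin 3 → ℤ := fun x => (x.val : ℤ)

/-- `f` conserves the number of 0's, of 1's and of 2's. -/
def allConserving3 (f : Rule3) : Prop :=
  conserves3 f Ψ0 ∧ conserves3 f Ψ1 ∧ conserves3 f Ψ2

/-- A binary rule is number-conserving. -/
def numConserving2 (g : Rule2) : Prop :=
  ∀ L : ℕ, ∀ x : ZMod (L + 3) → Fin 2,
    (∑ i, (glob2 g x i).val) = ∑ i, (x i).val

/-- The elementary CA rule with Wolfram number `w`. -/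
def ecaRule (w : ℕ) : Rule2 :=
  fun a b c => ⟨w / 2 ^ (4 * a.val + 2 * b.val + c.val) % 2, Nat.mod_lt _ (by norm_num)⟩

/-- Wolfram number of a binary rule. -/
def wolfram2 (g : Rule2) : ℕ :=
  ∑ a : Fin 2, ∑ b : Fin 2, ∑ c : Fin 2,
    (g a b c).val * 2 ^ (4 * a.val + 2 * b.val + c.val)

/-- Embedding of `{0,1}` into `{0,1,2}` as `{0,1}`. -/
def i01 : Fin 2 → Fin 3 := Fin.castLE (by norm_num)
/-- Embedding of `{0,1}` into `{0,1,2}` as `{0,2}`. -/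
def i02 : Fin 2 → Fin 3 := fun a => ⟨2 * a.val, by have := a.isLt; omega⟩
/-- Embedding of `{0,1}` into `{0,1,2}` as `{1,2}`. -/
def i12 : Fin 2 → Fin 3 := fun a => ⟨a.val + 1, by have := a.isLt; omega⟩

/-- The binary projection `f|_{01}` of `f` exists and equals the binary rule `h`. -/
def agrees01 (f : Rule3) (h : Rule2) : Prop :=
  ∀ a b c : Fin 2, f (i01 a) (i01 b) (i01 c) = i01 (h a b c)

/-- The binary projection `f|_{02}` of `f` exists and equals the binary rule `h`. -/
def agrees02 (f : Rule3) (h : Rule2) : Prop :=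
  ∀ a b c : Fin 2, f (i02 a) (i02 b) (i02 c) = i02 (h a b c)

/-- The binary projection `f|_{12}` of `f` exists and equals the binary rule `h`. -/
def agrees12 (f : Rule3) (h : Rule2) : Prop :=
  ∀ a b c : Fin 2, f (i12 a) (i12 b) (i12 c) = i12 (h a b c)

/-- `f` is reducible to two states: all three binary projections exist. -/
def reducible3 (f : Rule3) : Prop :=
  (∃ h, agrees01 f h) ∧ (∃ h, agrees02 f h) ∧ (∃ h, agrees12 f h)

/-- Number of occurrences of symbol `k` in the cyclic configuration `x`. -/
def count3 {n : ℕ} [NeZero n] (x : ZMod n → Fin 3) (k : Fin 3) : ℕ :=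
  (Finset.univ.filter fun i => x i = k).card

/-!
The identity says that `Ψ (F x)_i - Ψ x_{i-1} = J (x_i, x_{i+1}) - J (x_{i-1}, x_i)` for the flux
`J (a, b) = Ψ (f 0 0 a) + Ψ (f 0 a b)`, so the change of `∑ Ψ` telescopes to zero around the circle.
Conversely, conservation on the two words `x₀ x₁ x₂ 0 0 0` and `x₁ x₂ 0 0 0 0` of length 6, together
with `Ψ (f 0 0 0) = Ψ 0` from the word `0 0 0`, differ by exactly this identity.
-/

open Finset

theorem sum_glob3_eq_of_flux {n : ℕ} [NeZero n] {f : Rule3} {Ψ : Fin 3 → ℤ}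
    (Φ : Fin 3 → Fin 3 → ℤ) (h : ∀ a b c, Ψ (f a b c) = Ψ a + Φ b c - Φ a b)
    (x : ZMod n → Fin 3) : ∑ i, Ψ (glob3 f x i) = ∑ i, Ψ (x i) := by
  have shift (g : ZMod n → ℤ) : ∑ i, g (i - 1) = ∑ i, g i := (Equiv.subRight 1).sum_comp g
  calc ∑ i, Ψ (glob3 f x i)
      = ∑ i, (Ψ (x (i - 1)) + (Φ (x i) (x (i + 1)) - Φ (x (i - 1)) (x (i - 1 + 1)))) := by
        simp only [glob3, h, sub_add_cancel, add_sub_assoc]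
    _ = ∑ i, Ψ (x i) := by
        rw [sum_add_distrib, sum_sub_distrib, shift fun i => Ψ (x i),
          shift fun i => Φ (x i) (x (i + 1)), sub_self, add_zero]

namespace conserves3

variable {f : Rule3} {Ψ : Fin 3 → ℤ}

theorem apply_zero_zero_zero (hc : conserves3 f Ψ) : Ψ (f 0 0 0) = Ψ 0 := by
  have h := hc 0 fun _ => 0
  simp only [glob3, sum_const, card_univ, ZMod.card, zero_add, nsmul_eq_mul, Nat.cast_ofNat] at h
  omega

theorem sum_padded_triple (hc : conserves3 f Ψ) (a b c : Fin 3) :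
    Ψ (f 0 0 a) + Ψ (f 0 a b) + Ψ (f a b c) + Ψ (f b c 0) + Ψ (f c 0 0) + Ψ (f 0 0 0) =
      Ψ a + Ψ b + Ψ c + 3 * Ψ 0 := by
  have h := hc 3 ![a, b, c, 0, 0, 0]
  -- `ZMod 6` is `Fin 6` by definition, so the shifted indices and the entries evaluate by `change`.
  change ∑ i : Fin 6, _ = ∑ i : Fin 6, _ at h
  simp only [Fin.sum_univ_six, glob3] at h
  change Ψ (f 0 a b) + Ψ (f a b c) + Ψ (f b c 0) + Ψ (f c 0 0) + Ψ (f 0 0 0) + Ψ (f 0 0 a) =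
    Ψ a + Ψ b + Ψ c + Ψ 0 + Ψ 0 + Ψ 0 at h
  linarith

end conserves3

/-- Hattori–Takesue theorem for ternary nearest-neighbour CA (with `p = 0`). -/
theorem hattori_takesue (f : Rule3) (Ψ : Fin 3 → ℤ) :
    conserves3 f Ψ ↔
      ∀ x0 x1 x2 : Fin 3,
        Ψ (f x0 x1 x2) - Ψ x0 =
          Ψ (f 0 0 x1) + Ψ (f 0 x1 x2) - Ψ (f 0 0 x0) - Ψ (f 0 x0 x1) := by
  constructor
  · intro hc x0 x1 x2
    linarith [hc.sum_padded_triple x0 x1 x2, hc.sum_padded_triple x1 x2 0, hc.apply_zero_zero_zero]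
  · intro h L
    exact sum_glob3_eq_of_flux (fun a b => Ψ (f 0 0 a) + Ψ (f 0 a b)) fun a b c => by
      linarith [h a b c]
end

section
/- The number of local rules f: {0,1,2}^3 → {0,1,2} that conserve the number of cells in state 1 (i.e., conserve Ψ_1(x) = x(2-x) in the sense that ∑_i Ψ_1(x_i) is invariant under the global map on every finite cyclic configuration) is exactly 9 · 2^18 = 2359296. -/
/-
By the Hattori–Takesue theorem, `f` conserves the number of 1's iff its 1-indicator
`g = [f = 1]` satisfies `g(a,b,c) = Ψ₁(b) + φ(b,c) - φ(a,b)` for a flux `φ` read off from the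
slice `g(0,·,·)`. Hence `g` is determined by that slice, and a search over the `2^9` candidate
slices leaves exactly 9 admissible indicators. Summed over all 27 neighbourhoods the identity
telescopes to `∑ g = 9 ∑ Ψ₁ = 9`, so `g` vanishes on 18 neighbourhoods, where `f` may take
either of the values 0 and 2: every admissible indicator comes from `2^18` rules.
-/

theorem sum_comp_add_right_sub_eq_zero {G M : Type*} [AddGroup G] [Fintype G] [AddCommGroup M]
    (u : G → M) (g : G) : ∑ i, (u (i + g) - u i) = 0 := by
  rw [Finset.sum_sub_distrib, sub_eq_zero]
  exact Equiv.sum_comp (Equiv.addRight g) u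

theorem Nat.card_subtype_eq_mul_of_card_fiber {α β : Type*} [Finite β] (π : α → β)
    {p : α → Prop} {q : β → Prop} (hpq : ∀ x, p x ↔ q (π x)) {n : ℕ}
    (hn : ∀ y, q y → Nat.card {x // π x = y} = n) [∀ y, Finite {x // π x = y}] :
    Nat.card (Subtype p) = Nat.card (Subtype q) * n := by
  have := Fintype.ofFinite (Subtype q)
  rw [← Nat.card_congr (Equiv.sigmaSubtypeFiberEquivSubtype π hpq), Nat.card_sigma,
    Finset.sum_congr rfl fun (y : Subtype q) _ => hn y y.2, Finset.sum_const, Finset.card_univ,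
    smul_eq_mul, Nat.card_eq_fintype_card]

section HattoriTakesue

variable (Ψ : Fin 3 → ℤ)

def flux (h₀ : Fin 3 → Fin 3 → ℤ) (a b : Fin 3) : ℤ :=
  h₀ 0 a - Ψ 0 + (h₀ a b - Ψ a)

def htRule (h₀ : Fin 3 → Fin 3 → ℤ) (a b c : Fin 3) : ℤ :=
  Ψ b + flux Ψ h₀ b c - flux Ψ h₀ a b

theorem sum_htRule (h₀ : Fin 3 → Fin 3 → ℤ) :
    ∑ a, ∑ b, ∑ c, htRule Ψ h₀ a b c = 9 * ∑ b, Ψ b := by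
  simp only [htRule, Finset.sum_sub_distrib, Finset.sum_add_distrib, Finset.sum_const,
    Finset.card_univ, Fintype.card_fin, Int.nsmul_eq_mul, Nat.cast_ofNat, ← Finset.mul_sum]
  ring

theorem conserves3_of_eq_htRule (f : Rule3) (h₀ : Fin 3 → Fin 3 → ℤ)
    (hf : ∀ a b c, Ψ (f a b c) = htRule Ψ h₀ a b c) : conserves3 f Ψ := by
  intro L x
  have hflux := sum_comp_add_right_sub_eq_zero (fun i => flux Ψ h₀ (x (i - 1)) (x i)) 1
  simp only [add_sub_cancel_right] at hflux
  simp only [glob3, hf, htRule, add_sub_assoc, Finset.sum_add_distrib, hflux, add_zero]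

theorem eq_htRule_of_conserves3 {f : Rule3} (hf : conserves3 f Ψ) (a b c : Fin 3) :
    Ψ (f a b c) = htRule Ψ (fun a b => Ψ (f 0 a b)) a b c := by
  -- the two configurations differ by the cell `a` and by the three windows containing it
  have h₆ : Ψ (f 0 0 0) + Ψ (f 0 0 a) + Ψ (f 0 a b) + Ψ (f a b c) + Ψ (f b c 0) + Ψ (f c 0 0)
      = Ψ 0 + Ψ 0 + Ψ a + Ψ b + Ψ c + Ψ 0 := by
    have := hf 3 ![0, 0, a, b, c, 0]
    erw [Fin.sum_univ_six, Fin.sum_univ_six] at this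
    exact this
  have h₅ : Ψ (f 0 0 0) + Ψ (f 0 0 b) + Ψ (f 0 b c) + Ψ (f b c 0) + Ψ (f c 0 0)
      = Ψ 0 + Ψ 0 + Ψ b + Ψ c + Ψ 0 := by
    have := hf 2 ![0, 0, b, c, 0]
    erw [Fin.sum_univ_five, Fin.sum_univ_five] at this
    exact this
  simp only [htRule, flux]
  linarith

theorem conserves3_iff_eq_htRule (f : Rule3) :
    conserves3 f Ψ ↔ (fun a b c => Ψ (f a b c)) = htRule Ψ (fun a b => Ψ (f 0 a b)) :=
  ⟨fun hf => funext₃ (eq_htRule_of_conserves3 Ψ hf),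
    fun hf => conserves3_of_eq_htRule Ψ f _ (congrFun₃ hf)⟩

end HattoriTakesue

abbrev BoolRule := Fin 3 → Fin 3 → Fin 3 → Bool

def onesRule (f : Rule3) : BoolRule := fun a b c => f a b c = 1

def IsHattoriTakesue (g : BoolRule) : Prop :=
  (fun a b c => (g a b c).toInt) = htRule Ψ1 (fun a b => (g 0 a b).toInt)

instance : DecidablePred IsHattoriTakesue :=
  fun _ => inferInstanceAs (Decidable (_ = _))

theorem Ψ1_eq_toInt_decide (v : Fin 3) : Ψ1 v = (decide (v = 1)).toInt := by
  fin_cases v <;> rfl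

theorem conserves3_Ψ1_iff (f : Rule3) : conserves3 f Ψ1 ↔ IsHattoriTakesue (onesRule f) := by
  simp only [conserves3_iff_eq_htRule, Ψ1_eq_toInt_decide]
  rfl

def boolRuleOfSlice (r : Fin 3 → Fin 3 → Bool) : BoolRule :=
  fun a b c => htRule Ψ1 (fun a b => (r a b).toInt) a b c = 1

theorem boolRuleOfSlice_eq {g : BoolRule} (hg : IsHattoriTakesue g) :
    boolRuleOfSlice (g 0) = g := by
  funext a b c
  simp only [boolRuleOfSlice, ← congrFun₃ hg a b c]
  cases g a b c <;> rfl

def isHattoriTakesueEquivSlices : {g : BoolRule // IsHattoriTakesue g} ≃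
    {r : Fin 3 → Fin 3 → Bool //
      IsHattoriTakesue (boolRuleOfSlice r) ∧ boolRuleOfSlice r 0 = r} where
  toFun g := ⟨g.1 0, by rw [boolRuleOfSlice_eq g.2]; exact ⟨g.2, rfl⟩⟩
  invFun r := ⟨boolRuleOfSlice r.1, r.2.1⟩
  left_inv g := Subtype.ext (boolRuleOfSlice_eq g.2)
  right_inv r := Subtype.ext r.2.2

set_option maxRecDepth 4000 in
theorem card_isHattoriTakesue : Nat.card {g : BoolRule // IsHattoriTakesue g} = 9 := by
  rw [Nat.card_congr isHattoriTakesueEquivSlices, Nat.card_eq_fintype_card]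
  decide

theorem card_decide_eq_one_eq (b : Bool) :
    Nat.card {v : Fin 3 // decide (v = 1) = b} = 2 ^ (!b).toNat := by
  rw [Nat.card_eq_fintype_card]
  revert b
  decide

theorem sum_not_toNat_eq {g : BoolRule} (hg : IsHattoriTakesue g) :
    ∑ a, ∑ b, ∑ c, (!g a b c).toNat = 18 := by
  have hsum := sum_htRule Ψ1 (fun a b => (g 0 a b).toInt)
  rw [← hg] at hsum
  have hnot : ∀ x : Bool, ((!x).toNat : ℤ) = 1 - x.toInt := by decide
  have hones : ∑ v, Ψ1 v = 1 := rfl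
  zify
  simp only [hnot, Finset.sum_sub_distrib, hsum, hones]
  rfl

theorem card_onesRule_fiber {g : BoolRule} (hg : IsHattoriTakesue g) :
    Nat.card {f : Rule3 // onesRule f = g} = 2 ^ 18 := by
  have hfiber : {f : Rule3 // onesRule f = g} ≃ ∀ a b c, {v : Fin 3 // decide (v = 1) = g a b c} :=
    (Equiv.subtypeEquivRight fun f => by simp only [onesRule, funext_iff]).trans
      (Equiv.subtypePiEquivPi.trans <| Equiv.piCongrRight fun _ =>
        Equiv.subtypePiEquivPi.trans <| Equiv.piCongrRight fun _ => Equiv.subtypePiEquivPi)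
  simp only [Nat.card_congr hfiber, Nat.card_pi, card_decide_eq_one_eq,
    Finset.prod_pow_eq_pow_sum, sum_not_toNat_eq hg]

/-- There are exactly `9 * 2^18 = 2359296` ternary rules conserving the number of 1's. -/
theorem count_conserving_ones :
    Nat.card {f : Rule3 // conserves3 f Ψ1} = 9 * 2 ^ 18 := by
  rw [Nat.card_subtype_eq_mul_of_card_fiber onesRule conserves3_Ψ1_iff
    fun _ => card_onesRule_fiber, card_isHattoriTakesue]
end

section
/- The number of local rules f: {0,1,2}^3 → {0,1,2} that conserve the number of cells in state 0 (weight Ψ_0(x) = (1-x)(2-x)/2, the indicator of state 0) is exactly 9 · 2^18. -/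
/-!
Hattori–Takesue: `f` conserves `Ψ` iff `Ψ (f a b c) = Ψ b + J a b - J b c` for some flux `J`,
and comparing the configurations `00bc` and `00abc` shows that
`J a b = Ψ a - Ψ (f 0 0 a) - Ψ (f 0 a b)` works. For `Ψ = Ψ0` this involves only the zero
pattern `[f a b c = 0]`, which is therefore determined by its slice `a = 0`. Checking the `2 ^ 9`
slices leaves 9 conserving zero patterns, each with 18 cells whose output is free in `{1, 2}`.
-/

open Finset Fintype

section HattoriTakesue

variable {f : Rule3} {Ψ : Fin 3 → ℤ}

theorem conserves3_of_flux (J : Fin 3 → Fin 3 → ℤ)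
    (hJ : ∀ a b c, Ψ (f a b c) = Ψ b + J a b - J b c) : conserves3 f Ψ := by
  intro L x
  have shift : ∑ i, J (x (i - 1)) (x i) = ∑ i, J (x i) (x (i + 1)) := by
    rw [← Equiv.sum_comp (Equiv.addRight (1 : ZMod (L + 3)))]
    simp only [Equiv.coe_addRight, add_sub_cancel_right]
  simp only [glob3, hJ, sum_sub_distrib, sum_add_distrib, shift, add_sub_cancel_right]

theorem conserves3.apply_eq (hf : conserves3 f Ψ) (a b c : Fin 3) :
    Ψ (f a b c) = Ψ b + (Ψ a - Ψ (f 0 0 a) - Ψ (f 0 a b))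
      - (Ψ b - Ψ (f 0 0 b) - Ψ (f 0 b c)) := by
  have h4 : Ψ (f c 0 0) + Ψ (f 0 0 b) + Ψ (f 0 b c) + Ψ (f b c 0)
      = Ψ 0 + Ψ 0 + Ψ b + Ψ c := by
    have h : ∑ i : Fin 4, _ = ∑ i : Fin 4, _ := hf 1 ![0, 0, b, c]
    rwa [Fin.sum_univ_four, Fin.sum_univ_four] at h
  have h5 : Ψ (f c 0 0) + Ψ (f 0 0 a) + Ψ (f 0 a b) + Ψ (f a b c) + Ψ (f b c 0)
      = Ψ 0 + Ψ 0 + Ψ a + Ψ b + Ψ c := by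
    have h : ∑ i : Fin 5, _ = ∑ i : Fin 5, _ := hf 2 ![0, 0, a, b, c]
    rwa [Fin.sum_univ_five, Fin.sum_univ_five] at h
  linarith

end HattoriTakesue

theorem Ψ0_eq_toInt (x : Fin 3) : Ψ0 x = (decide (x = 0)).toInt := by
  revert x; decide

abbrev BoolRule3 := Fin 3 → Fin 3 → Fin 3 → Bool

def zeroPattern (f : Rule3) : BoolRule3 := fun a b c => decide (f a b c = 0)

/-- The right-hand side of `conserves3.apply_eq` for `Ψ0`, with `W b c = [f 0 b c = 0]`. -/
def forcedValue (W : Fin 3 → Fin 3 → Bool) (a b c : Fin 3) : ℤ :=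
  (decide (a = 0)).toInt - (W 0 a).toInt - (W a b).toInt + (W 0 b).toInt + (W b c).toInt

def IsConservingPattern (z : BoolRule3) : Prop :=
  ∀ a b c, (z a b c).toInt = forcedValue (z 0) a b c

instance : DecidablePred IsConservingPattern := fun _ => by
  unfold IsConservingPattern; infer_instance

theorem conserves3_Ψ0_iff {f : Rule3} :
    conserves3 f Ψ0 ↔ IsConservingPattern (zeroPattern f) := by
  simp only [IsConservingPattern, forcedValue, zeroPattern, ← Ψ0_eq_toInt]
  constructor
  · intro hf a b c
    rw [hf.apply_eq]
    ring
  · intro hz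
    refine conserves3_of_flux (fun a b => Ψ0 a - Ψ0 (f 0 0 a) - Ψ0 (f 0 a b)) fun a b c => ?_
    rw [hz]
    ring

def extendSlice (W : Fin 3 → Fin 3 → Bool) : BoolRule3 :=
  fun a b c => decide (forcedValue W a b c = 1)

def conservingPatterns : Finset BoolRule3 :=
  (univ.filter fun W => IsConservingPattern (extendSlice W)).image extendSlice

theorem mem_conservingPatterns {z : BoolRule3} :
    z ∈ conservingPatterns ↔ IsConservingPattern z := by
  simp only [conservingPatterns, mem_image, mem_filter, mem_univ, true_and]
  refine ⟨fun ⟨W, hW, hWz⟩ => hWz ▸ hW, fun hz => ⟨z 0, ?_⟩⟩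
  have hz0 : extendSlice (z 0) = z := by
    funext a b c
    simp only [extendSlice, ← hz a b c]
    cases z a b c <;> decide
  exact ⟨by rwa [hz0], hz0⟩

/-- There are 9 conserving patterns, each with 18 cells of nonzero output. -/
theorem sum_prod_conservingPatterns :
    ∑ z ∈ conservingPatterns, ∏ a, ∏ b, ∏ c, (if z a b c then 1 else 2) = 9 * 2 ^ 18 := by
  decide

theorem filter_zeroPattern_eq_piFinset (z : BoolRule3) :
    ({f | zeroPattern f = z} : Finset Rule3) =
      piFinset fun a => piFinset fun b => piFinset fun c => {y | decide (y = 0) = z a b c} := by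
  ext f
  simp only [zeroPattern, funext_iff, mem_filter, mem_univ, true_and, mem_piFinset]

theorem card_zeroPattern_eq (z : BoolRule3) :
    #{f : Rule3 | zeroPattern f = z} = ∏ a, ∏ b, ∏ c, (if z a b c then 1 else 2) := by
  simp only [filter_zeroPattern_eq_piFinset, card_piFinset]
  refine prod_congr rfl fun a _ => prod_congr rfl fun b _ => prod_congr rfl fun c _ => ?_
  cases z a b c <;> rfl

/-- There are exactly `9 * 2^18` ternary rules conserving the number of 0's. -/
theorem count_conserving_zeros :
    Nat.card {f : Rule3 // conserves3 f Ψ0} = 9 * 2 ^ 18 := by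
  calc Nat.card {f : Rule3 // conserves3 f Ψ0}
      = #{f : Rule3 | zeroPattern f ∈ conservingPatterns} := by
        simp only [Nat.card_eq_fintype_card, ← Fintype.card_subtype, conserves3_Ψ0_iff,
          mem_conservingPatterns]
    _ = ∑ z ∈ conservingPatterns, #{f : Rule3 | zeroPattern f = z} :=
        (sum_card_fiberwise_eq_card_filter _ _ _).symm
    _ = 9 * 2 ^ 18 := by simp only [card_zeroPattern_eq, sum_prod_conservingPatterns]
end

section
/- There are exactly 15 all-conserving ternary nearest-neighbour CA rules, i.e., local rules f: {0,1,2}^3 → {0,1,2} that simultaneously conserve the number of 0's, the number of 1's, and the number of 2's. -/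
/-! Comparing the test configurations `a b c 0 0 0` and `a b 0 0 0` shows (Hattori–Takesue) that
`f` conserves a weight `Ψ` iff
`Ψ (f a b c) + Ψ (f b c 0) + Ψ (f c 0 0) = Ψ (f a b 0) + Ψ (f b 0 0) + Ψ c` for all `a b c`.
For the three indicator weights together this says that the windows `[f a b c, f b c 0, f c 0 0]`
and `[f a b 0, f b 0 0, c]` agree as multisets. Hence `f 0 0 0 = 0`, `f a b 0 ∈ {0, a, b}`, and
`f a b c` is what remains of `[f a b 0, f b 0 0, c]` after removing `f b c 0` and `f c 0 0`:
the rule is determined by its restriction `f · · 0`. That leaves `2⁶ · 3² = 576` restrictions,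
and a finite check finds exactly 15 of them that extend to an all-conserving rule. -/

open List

theorem sum_glob3_eq_of_telescoping {M : Type*} [AddCommGroup M] {n : ℕ} [NeZero n] (f : Rule3)
    (Ψ : Fin 3 → M) (G : Fin 3 → Fin 3 → M) (h : ∀ a b c, Ψ (f a b c) = Ψ b + G a b - G b c)
    (x : ZMod n → Fin 3) : ∑ i, Ψ (glob3 f x i) = ∑ i, Ψ (x i) := by
  have shift : ∑ i, G (x i) (x (i + 1)) = ∑ i, G (x (i - 1)) (x i) :=
    ((Equiv.subRight 1).sum_comp fun i => G (x i) (x (i + 1))).symm.trans (by simp)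
  simp only [glob3, h, Finset.sum_sub_distrib, Finset.sum_add_distrib, shift, add_sub_cancel_right]

theorem conserves3_iff (f : Rule3) (Ψ : Fin 3 → ℤ) :
    conserves3 f Ψ ↔ ∀ a b c,
      Ψ (f a b c) + Ψ (f b c 0) + Ψ (f c 0 0) = Ψ (f a b 0) + Ψ (f b 0 0) + Ψ c := by
  constructor
  · intro h a b c
    have h5 := (Fin.sum_univ_five _).symm.trans ((h 2 ![a, b, 0, 0, 0]).trans (Fin.sum_univ_five _))
    have h6 := (Fin.sum_univ_six _).symm.trans
      ((h 3 ![a, b, c, 0, 0, 0]).trans (Fin.sum_univ_six _))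
    change Ψ (f 0 a b) + Ψ (f a b 0) + Ψ (f b 0 0) + Ψ (f 0 0 0) + Ψ (f 0 0 a)
      = Ψ a + Ψ b + Ψ 0 + Ψ 0 + Ψ 0 at h5
    change Ψ (f 0 a b) + Ψ (f a b c) + Ψ (f b c 0) + Ψ (f c 0 0) + Ψ (f 0 0 0) + Ψ (f 0 0 a)
      = Ψ a + Ψ b + Ψ c + Ψ 0 + Ψ 0 + Ψ 0 at h6
    linarith
  · intro h L x
    refine sum_glob3_eq_of_telescoping f Ψ (fun a b => Ψ (f a b 0) + Ψ (f b 0 0) - Ψ b) ?_ x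
    intro a b c
    linarith [h a b c]

theorem List.sum_map_single_one {α R : Type*} [DecidableEq α] [AddCommMonoidWithOne R] (k : α)
    (l : List α) : (l.map (Pi.single k (1 : R))).sum = l.count k := by
  induction l with
  | nil => simp
  | cons x l ih => simp [List.count_cons, Pi.single_apply, ih, add_comm]

theorem List.perm_iff_forall_sum_map_single_one {α R : Type*} [DecidableEq α]
    [AddCommMonoidWithOne R] [CharZero R] {l₁ l₂ : List α} :
    l₁ ~ l₂ ↔ ∀ k, (l₁.map (Pi.single k (1 : R))).sum = (l₂.map (Pi.single k 1)).sum := by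
  simp [List.perm_iff_count, List.sum_map_single_one]

theorem Ψ0_eq_single : Ψ0 = Pi.single 0 1 := by decide
theorem Ψ1_eq_single : Ψ1 = Pi.single 1 1 := by decide
theorem Ψ2_eq_single : Ψ2 = Pi.single 2 1 := by decide

theorem allConserving3_iff_forall_conserves3_single (f : Rule3) :
    allConserving3 f ↔ ∀ k, conserves3 f (Pi.single k 1) := by
  rw [allConserving3, Ψ0_eq_single, Ψ1_eq_single, Ψ2_eq_single]
  exact ⟨fun h k => by fin_cases k; exacts [h.1, h.2.1, h.2.2], fun h => ⟨h 0, h 1, h 2⟩⟩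

def MultisetFlux (f : Rule3) : Prop :=
  ∀ a b c, [f a b c, f b c 0, f c 0 0] ~ [f a b 0, f b 0 0, c]

instance : DecidablePred MultisetFlux := fun f => by unfold MultisetFlux; infer_instance

theorem allConserving3_iff_multisetFlux (f : Rule3) : allConserving3 f ↔ MultisetFlux f := by
  simp only [allConserving3_iff_forall_conserves3_single, conserves3_iff, MultisetFlux,
    List.perm_iff_forall_sum_map_single_one (R := ℤ), List.map_cons, List.map_nil, List.sum_cons,
    List.sum_nil, add_zero, add_assoc]
  exact ⟨fun h a b c k => h k a b c, fun h k a b c => h a b c k⟩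

theorem List.erase_erase_eq_of_perm {α : Type*} [DecidableEq α] {x y z : α} {l : List α}
    (h : [x, y, z] ~ l) : (l.erase y).erase z = [x] := by
  have h' : [y, z, x] ~ l := (List.perm_middle (l₁ := [y, z]) (l₂ := [])).trans h
  simpa using ((h'.erase y).erase z).symm

def extendByFlux (g : Fin 3 → Fin 3 → Fin 3) : Rule3 := fun a b c =>
  (([g a b, g b 0, c].erase (g b c)).erase (g c 0)).headD 0

namespace MultisetFlux

variable {f : Rule3}

theorem apply_zero_zero_zero (hf : MultisetFlux f) : f 0 0 0 = 0 := by
  simpa [eq_comm] using (hf 0 0 0).symm.subset (by simp : (0 : Fin 3) ∈ [f 0 0 0, f 0 0 0, 0])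

theorem apply_mem (hf : MultisetFlux f) (a b : Fin 3) : f a b 0 ∈ [0, a, b] := by
  have h1 := hf 0 a b
  have h2 := hf 0 0 a
  rw [hf.apply_zero_zero_zero] at h2
  have hx : f a b 0 ∈ [f 0 a 0, f a 0 0, b] := h1.subset (by simp)
  have hy : f 0 a 0 ∈ [0, 0, a] := h2.subset (by simp)
  have hz : f a 0 0 ∈ [0, 0, a] := h2.subset (by simp)
  simp only [List.mem_cons, List.not_mem_nil, or_false] at hx hy hz ⊢
  grind

theorem eq_extendByFlux (hf : MultisetFlux f) : f = extendByFlux fun a b => f a b 0 := by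
  funext a b c
  simp [extendByFlux, List.erase_erase_eq_of_perm (hf a b c)]

end MultisetFlux

def pairTable (v₁ v₂ v₃ v₄ v₅ v₆ v₇ v₈ : Fin 3) : Fin 3 → Fin 3 → Fin 3 :=
  ![![0, v₁, v₂], ![v₃, v₄, v₅], ![v₆, v₇, v₈]]

def ruleOfTable (t : Fin 27 → Fin 3) : Rule3 :=
  fun a b c => t ⟨9 * a.val + 3 * b.val + c.val, by omega⟩

def allConservingRules : List Rule3 := [
  ruleOfTable ![0, 0, 0, 0, 0, 0, 0, 0, 0, 1, 1, 1, 1, 1, 1, 1, 1, 1, 2, 2, 2, 2, 2, 2, 2, 2, 2],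
  ruleOfTable ![0, 0, 0, 0, 1, 1, 0, 2, 2, 1, 1, 1, 0, 1, 1, 0, 2, 2, 2, 2, 2, 0, 1, 1, 0, 2, 2],
  ruleOfTable ![0, 0, 0, 0, 1, 1, 2, 2, 2, 1, 1, 1, 0, 1, 1, 2, 2, 2, 0, 0, 0, 0, 1, 1, 2, 2, 2],
  ruleOfTable ![0, 0, 0, 0, 1, 2, 2, 2, 2, 1, 1, 1, 0, 1, 2, 1, 1, 1, 0, 0, 0, 0, 1, 2, 2, 2, 2],
  ruleOfTable ![0, 0, 0, 1, 1, 1, 0, 1, 2, 0, 0, 0, 1, 1, 1, 0, 1, 2, 2, 2, 2, 2, 2, 2, 0, 1, 2],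
  ruleOfTable ![0, 0, 0, 1, 1, 1, 0, 2, 2, 0, 0, 0, 1, 1, 1, 0, 2, 2, 2, 2, 2, 1, 1, 1, 0, 2, 2],
  ruleOfTable ![0, 0, 0, 1, 1, 1, 2, 1, 2, 0, 0, 0, 1, 1, 1, 2, 1, 2, 0, 0, 0, 2, 2, 2, 2, 1, 2],
  ruleOfTable ![0, 0, 0, 1, 1, 1, 2, 2, 2, 0, 0, 0, 1, 1, 1, 2, 2, 2, 0, 0, 0, 1, 1, 1, 2, 2, 2],
  ruleOfTable ![0, 0, 0, 1, 1, 2, 2, 2, 2, 0, 0, 0, 1, 1, 2, 1, 1, 1, 0, 0, 0, 1, 1, 2, 2, 2, 2],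
  ruleOfTable ![0, 0, 2, 1, 1, 1, 0, 0, 0, 0, 0, 2, 1, 1, 1, 2, 2, 2, 0, 0, 2, 1, 1, 1, 2, 2, 2],
  ruleOfTable ![0, 0, 2, 1, 1, 2, 0, 0, 0, 0, 0, 2, 1, 1, 2, 1, 1, 1, 0, 0, 2, 1, 1, 2, 2, 2, 2],
  ruleOfTable ![0, 1, 0, 0, 0, 0, 2, 1, 2, 0, 1, 0, 1, 1, 1, 2, 1, 2, 0, 1, 0, 2, 2, 2, 2, 1, 2],
  ruleOfTable ![0, 1, 0, 0, 0, 0, 2, 2, 2, 0, 1, 0, 1, 1, 1, 2, 2, 2, 0, 1, 0, 1, 1, 1, 2, 2, 2],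
  ruleOfTable ![0, 1, 2, 0, 0, 0, 0, 0, 0, 0, 1, 2, 1, 1, 1, 2, 2, 2, 0, 1, 2, 1, 1, 1, 2, 2, 2],
  ruleOfTable ![0, 1, 2, 0, 1, 2, 0, 1, 2, 0, 1, 2, 0, 1, 2, 0, 1, 2, 0, 1, 2, 0, 1, 2, 0, 1, 2]]

-- Each range is the list `[0, a, b]` of `MultisetFlux.apply_mem` at the corresponding `a b`.
theorem mem_allConservingRules_of_multisetFlux_pairTable :
    ∀ v₁ ∈ [0, 1], ∀ v₂ ∈ [0, 2], ∀ v₃ ∈ [0, 1], ∀ v₄ ∈ [0, 1], ∀ v₅ : Fin 3, ∀ v₆ ∈ [0, 2],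
      ∀ v₇ : Fin 3, ∀ v₈ ∈ [0, 2],
      MultisetFlux (extendByFlux (pairTable v₁ v₂ v₃ v₄ v₅ v₆ v₇ v₈)) →
      extendByFlux (pairTable v₁ v₂ v₃ v₄ v₅ v₆ v₇ v₈) ∈ allConservingRules := by
  decide +kernel

theorem MultisetFlux.mem_allConservingRules {f : Rule3} (hf : MultisetFlux f) :
    f ∈ allConservingRules := by
  have hrestr : (fun a b => f a b 0) = pairTable (f 0 1 0) (f 0 2 0) (f 1 0 0) (f 1 1 0)
      (f 1 2 0) (f 2 0 0) (f 2 1 0) (f 2 2 0) := by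
    funext a b
    fin_cases a <;> fin_cases b <;> first | exact hf.apply_zero_zero_zero | rfl
  have hrange (a b : Fin 3) (l : List (Fin 3)) (hl : [0, a, b] ⊆ l) : f a b 0 ∈ l :=
    hl (hf.apply_mem a b)
  have hext := hrestr ▸ hf.eq_extendByFlux
  rw [hext] at hf ⊢
  exact mem_allConservingRules_of_multisetFlux_pairTable
    _ (hrange 0 1 _ (by decide)) _ (hrange 0 2 _ (by decide)) _ (hrange 1 0 _ (by decide))
    _ (hrange 1 1 _ (by decide)) _ _ (hrange 2 0 _ (by decide)) _ _ (hrange 2 2 _ (by decide)) hf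

theorem multisetFlux_of_mem_allConservingRules : ∀ f ∈ allConservingRules, MultisetFlux f := by
  simp only [allConservingRules, List.forall_mem_cons, List.not_mem_nil, IsEmpty.forall_iff,
    forall_const, and_true]
  and_intros <;> decide +kernel

theorem allConservingRules_nodup : allConservingRules.Nodup := by
  decide +kernel

/-- There are exactly 15 all-conserving ternary nearest-neighbour rules. -/
theorem count_all_conserving :
    Nat.card {f : Rule3 // allConserving3 f} = 15 := by
  have hmem (f : Rule3) : allConserving3 f ↔ f ∈ allConservingRules.toFinset := by
    rw [allConserving3_iff_multisetFlux, List.mem_toFinset]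
    exact ⟨MultisetFlux.mem_allConservingRules, multisetFlux_of_mem_allConservingRules f⟩
  rw [Nat.card_congr (Equiv.subtypeEquivRight hmem), Nat.card_eq_finsetCard,
    List.toFinset_card_of_nodup allConservingRules_nodup]
  rfl
end

section
/- There is no local rule g: {0,1}^3 → {0,1} and integers m, n (possibly depending on L) such that for every L ≥ 3 and every cyclic binary configuration x of length L with density ρ = (1/L)∑ x_i ≠ 1/2, iterating the global map of g yields the all-0 configuration when ρ < 1/2 and the all-1 configuration when ρ > 1/2. (Non-existence of a single-rule solution to the binary density classification problem for elementary CA.) -/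
/-!
Every elementary rule misclassifies some configuration `1^k 0^(n-k)` with `n ≤ 5` and `2k ≠ n`:
its orbit never visits the uniform configuration of the majority symbol. A ring of length `n`
carries only `2^n` configurations, so every point of an orbit is reached within its first `2^n`
steps, and following these orbits for all 256 rules is a finite computation.
-/

namespace Function

variable {α : Type*} [Fintype α] (f : α → α) (x : α)

theorem exists_lt_card_iterate_eq (t : ℕ) : ∃ s < Fintype.card α, f^[s] x = f^[t] x := by
  induction t using Nat.strong_induction_on with
  | _ t ih =>
    by_cases ht : t < Fintype.card α
    · exact ⟨t, ht, rfl⟩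
    obtain ⟨i, j, hij, hfij⟩ := Fintype.exists_ne_map_eq_of_card_lt
      (fun i : Fin (Fintype.card α + 1) => f^[i] x) (by simp)
    wlog hlt : i < j generalizing i j
    · exact this j i hij.symm hfij.symm (by omega)
    have hcycle : f^[t - (j - i)] x = f^[t] x :=
      calc f^[t - (j - i)] x = f^[t - j] (f^[i] x) := by
            rw [← iterate_add_apply]; congr 1; omega
        _ = f^[t - j] (f^[j] x) := by rw [hfij]
        _ = f^[t] x := by rw [← iterate_add_apply]; congr 1; omega
    obtain ⟨s, hs, hfs⟩ := ih (t - (j - i)) (by omega)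
    exact ⟨s, hs, hfs.trans hcycle⟩

theorem iterate_ne_of_forall_lt_card {y : α} (h : ∀ t < Fintype.card α, f^[t] x ≠ y) (t : ℕ) :
    f^[t] x ≠ y := by
  obtain ⟨s, hs, hst⟩ := exists_lt_card_iterate_eq f x t
  exact hst ▸ h s hs

end Function

/-- Extensionally the identity (`memoize_eq`), but the kernel evaluates each entry of
`memoize y` only once; iterating `memoize ∘ glob2 g` instead of `glob2 g` makes the evaluation
of an orbit linear rather than exponential in its length. -/
def memoize {n : ℕ} [NeZero n] {α : Type*} (y : ZMod n → α) : ZMod n → α :=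
  fun i => (List.ofFn fun j : Fin n => y (j : ℕ))[i.val]'(by simpa using ZMod.val_lt i)

theorem memoize_eq {n : ℕ} [NeZero n] {α : Type*} (y : ZMod n → α) : memoize y = y := by
  funext i
  simp [memoize]

def blockConfig (n k : ℕ) : ZMod n → Fin 2 := fun i => if i.val < k then 1 else 0

section Misclassification

variable {n : ℕ} [NeZero n]

def Misclassifies (g : Rule2) (x : ZMod n → Fin 2) : Prop :=
  (2 * ∑ i, (x i).val < n ∧ ∀ t, (glob2 g)^[t] x ≠ fun _ => 0) ∨
  (n < 2 * ∑ i, (x i).val ∧ ∀ t, (glob2 g)^[t] x ≠ fun _ => 1)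

def MisclassifiesWithin (g : Rule2) (x : ZMod n → Fin 2) : Prop :=
  (2 * ∑ i, (x i).val < n ∧ ∀ t < 2 ^ n, (memoize ∘ glob2 g)^[t] x ≠ fun _ => 0) ∨
  (n < 2 * ∑ i, (x i).val ∧ ∀ t < 2 ^ n, (memoize ∘ glob2 g)^[t] x ≠ fun _ => 1)

instance (g : Rule2) (x : ZMod n → Fin 2) : Decidable (MisclassifiesWithin g x) :=
  by unfold MisclassifiesWithin; infer_instance

theorem MisclassifiesWithin.misclassifies {g : Rule2} {x : ZMod n → Fin 2}
    (h : MisclassifiesWithin g x) : Misclassifies g x := by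
  have hmemo : memoize ∘ glob2 g = glob2 (n := n) g := funext fun y => memoize_eq _
  have hcard : Fintype.card (ZMod n → Fin 2) = 2 ^ n := by simp
  rw [MisclassifiesWithin, hmemo, ← hcard] at h
  exact h.imp (And.imp_right (Function.iterate_ne_of_forall_lt_card _ _))
    (And.imp_right (Function.iterate_ne_of_forall_lt_card _ _))

end Misclassification

theorem exists_misclassifiesWithin_blockConfig :
    ∀ g : Rule2, ∃ L < 3, ∃ k < L + 3, MisclassifiesWithin g (blockConfig (L + 3) k) := by
  decide +kernel

/-- No single elementary CA rule solves the binary density classification problem. -/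
theorem no_single_rule_DCP :
    ¬ ∃ g : Rule2, ∀ L : ℕ, ∀ x : ZMod (L + 3) → Fin 2,
      (2 * (∑ i, (x i).val) < L + 3 →
        ∃ t : ℕ, (glob2 g)^[t] x = fun _ => 0) ∧
      (L + 3 < 2 * (∑ i, (x i).val) →
        ∃ t : ℕ, (glob2 g)^[t] x = fun _ => 1) := by
  rintro ⟨g, hg⟩
  obtain ⟨L, -, k, -, hwithin⟩ := exists_misclassifiesWithin_blockConfig g
  rcases hwithin.misclassifies with ⟨hlt, hne⟩ | ⟨hgt, hne⟩
  · obtain ⟨t, ht⟩ := (hg L _).1 hlt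
    exact hne t ht
  · obtain ⟨t, ht⟩ := (hg L _).2 hgt
    exact hne t ht
end

section
/- Let f_184 be the local rule of elementary CA 184 and f_232 the local rule of elementary CA 232, with global maps F_184, F_232 on cyclic binary configurations of length L. Set n = ⌊(L-2)/2⌋ and m = ⌊(L-1)/2⌋. Then for any x ∈ {0,1}^L with density ρ = (1/L)∑ x_i: F_232^m(F_184^n(x)) = 0^L if ρ < 1/2, and F_232^m(F_184^n(x)) = 1^L if ρ > 1/2. -/
/-!
Read a configuration as a lattice path, a `0` being an up-step and a `1` (a car) a down-step.
One step of rule 184 replaces the height function `H` by `m ↦ min (H m) (H (m + 2))`, up to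
a shift of the origin, so after `t` steps the height is the minimum of `H` over the window
`m, m + 2, …, m + 2t`. Two adjacent cars after `t = ⌊(N-2)/2⌋` steps force
`H (2t + 2) ≤ H 0 - 2`, whereas below density `1/2` the path ends at height `N - 2 ∑ x > 0`
and `2t + 2 ≥ N - 1`. Rule 184 conserves cars, so at most `⌊(N-1)/2⌋` isolated ones remain.
On such a configuration majority makes a cell `1` only when both neighbours were `1`; this
loses no one only if the ones are `2`-periodic around the ring, which needs at least half the
cells, so each step of rule 232 removes a one. The dense case follows from the sparse one by
the complement–reflection symmetry `x ↦ (i ↦ 1 - x (-i))`, which commutes with both rules.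
-/

open Finset Function

namespace DensityClassification

variable {N : ℕ}

section Symmetry

def flipReflect (x : ZMod N → Fin 2) : ZMod N → Fin 2 := fun i => (x (-i)).rev

lemma flipReflect_involutive : Involutive (flipReflect (N := N)) := fun x => by
  funext i
  simp [flipReflect]

lemma flipReflect_const (b : Fin 2) : flipReflect (fun _ : ZMod N => b) = fun _ => b.rev := rfl

lemma glob2_flipReflect {g : Rule2} (hg : ∀ a b c, g c.rev b.rev a.rev = (g a b c).rev)
    (x : ZMod N → Fin 2) : glob2 g (flipReflect x) = flipReflect (glob2 g x) := by
  funext i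
  simp only [glob2, flipReflect, ← hg]
  rw [neg_sub', sub_neg_eq_add, neg_add']

lemma iterate_glob2_flipReflect {g : Rule2}
    (hg : ∀ a b c, g c.rev b.rev a.rev = (g a b c).rev) (k : ℕ) (x : ZMod N → Fin 2) :
    (glob2 g)^[k] (flipReflect x) = flipReflect ((glob2 g)^[k] x) :=
  Commute.iterate_left (glob2_flipReflect hg) k x

lemma sum_val_flipReflect_add [NeZero N] (x : ZMod N → Fin 2) :
    ∑ i, (flipReflect x i).val + ∑ i, (x i).val = N := by
  have hneg : ∑ i, (flipReflect x i).val = ∑ i, (x i).rev.val :=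
    Fintype.sum_equiv (Equiv.neg _) _ _ fun _ => rfl
  rw [hneg, ← sum_add_distrib]
  calc ∑ i, ((x i).rev.val + (x i).val) = ∑ _ : ZMod N, 1 :=
        sum_congr rfl fun i _ => by rw [Fin.val_rev]; omega
    _ = N := by simp

lemma ecaRule_184_rev (a b c : Fin 2) :
    ecaRule 184 c.rev b.rev a.rev = (ecaRule 184 a b c).rev := by
  revert a b c; decide

lemma ecaRule_232_rev (a b c : Fin 2) :
    ecaRule 232 c.rev b.rev a.rev = (ecaRule 232 a b c).rev := by
  revert a b c; decide

end Symmetry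

lemma sum_range_natCast [NeZero N] {M : Type*} [AddCommMonoid M] (h : ZMod N → M) :
    ∑ k ∈ range N, h k = ∑ j, h j :=
  sum_nbij' (↑) ZMod.val (by simp) (by simp [ZMod.val_lt])
    (fun k hk => by simp [Nat.mod_eq_of_lt (mem_range.1 hk)]) (by simp) (by simp)

lemma half_le_card_of_sub_two_mem [NeZero N] {S : Finset (ZMod N)} (hS : S.Nonempty)
    (hsub : ∀ j ∈ S, j - 2 ∈ S) : (N + 1) / 2 ≤ S.card := by
  obtain ⟨j, hj⟩ := hS
  have hchain : ∀ k : ℕ, j - 2 * k ∈ S := by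
    intro k
    induction k with
    | zero => simpa using hj
    | succ k ih => simpa [mul_add, sub_add_eq_sub_sub] using hsub _ ih
  calc (N + 1) / 2 = ((range ((N + 1) / 2)).image fun k : ℕ => j - 2 * k).card := by
        rw [card_image_of_injOn, card_range]
        intro a ha b hb hab
        simp only [coe_range, Set.mem_Iio] at ha hb
        have h : ((2 * a : ℕ) : ZMod N) = (2 * b : ℕ) := by
          push_cast
          exact sub_right_injective hab
        have h := congrArg ZMod.val h
        rw [ZMod.val_cast_of_lt (by omega), ZMod.val_cast_of_lt (by omega)] at h
        omega
    _ ≤ S.card := card_le_card fun _ hk => by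
        obtain ⟨k, -, rfl⟩ := mem_image.1 hk
        exact hchain k

section Majority

def NoAdjacentOnes (y : ZMod N → Fin 2) : Prop := ∀ i, ¬(y i = 1 ∧ y (i + 1) = 1)

def ones [NeZero N] (y : ZMod N → Fin 2) : Finset (ZMod N) := univ.filter (y · = 1)

lemma card_ones [NeZero N] (y : ZMod N → Fin 2) : (ones y).card = ∑ i, (y i).val := by
  rw [ones, card_filter]
  refine sum_congr rfl fun i _ => ?_
  generalize y i = v
  revert v; decide

variable {y : ZMod N → Fin 2}

lemma glob2_232_eq_one_iff (hy : NoAdjacentOnes y) (i : ZMod N) :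
    glob2 (ecaRule 232) y i = 1 ↔ y (i - 1) = 1 ∧ y (i + 1) = 1 := by
  have hl := hy (i - 1)
  rw [sub_add_cancel] at hl
  have local_rule : ∀ p q r : Fin 2, ¬(p = 1 ∧ q = 1) → ¬(q = 1 ∧ r = 1) →
      (ecaRule 232 p q r = 1 ↔ p = 1 ∧ r = 1) := by decide
  exact local_rule _ _ _ hl (hy i)

lemma NoAdjacentOnes.glob2_232 (hy : NoAdjacentOnes y) :
    NoAdjacentOnes (glob2 (ecaRule 232) y) := by
  rintro i ⟨hi, hi'⟩
  have h := (glob2_232_eq_one_iff hy i).1 hi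
  have h' := (glob2_232_eq_one_iff hy (i + 1)).1 hi'
  rw [add_sub_cancel_right] at h'
  exact hy i ⟨h'.1, h.2⟩

section Card

variable [NeZero N]

lemma image_add_one_ones_glob2_232_subset (hy : NoAdjacentOnes y) :
    (ones (glob2 (ecaRule 232) y)).image (· + 1) ⊆ ones y := by
  simp only [subset_iff, mem_image, ones, mem_filter, mem_univ, true_and]
  rintro _ ⟨i, hi, rfl⟩
  exact ((glob2_232_eq_one_iff hy i).1 hi).2

lemma card_ones_glob2_232_le (hy : NoAdjacentOnes y) :
    (ones (glob2 (ecaRule 232) y)).card ≤ (ones y).card := by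
  rw [← card_image_of_injective _ (add_left_injective 1)]
  exact card_le_card (image_add_one_ones_glob2_232_subset hy)

lemma sub_two_mem_ones_of_card_eq (hy : NoAdjacentOnes y)
    (hcard : (ones (glob2 (ecaRule 232) y)).card = (ones y).card) {j : ZMod N}
    (hj : j ∈ ones y) : j - 2 ∈ ones y := by
  have himage := eq_of_subset_of_card_le (image_add_one_ones_glob2_232_subset hy)
    (by rw [card_image_of_injective _ (add_left_injective 1), hcard])
  rw [← himage, mem_image] at hj
  obtain ⟨i, hi, rfl⟩ := hj
  simp only [ones, mem_filter, mem_univ, true_and] at hi ⊢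
  rw [show i + 1 - 2 = i - 1 by ring]
  exact ((glob2_232_eq_one_iff hy i).1 hi).1

lemma card_ones_glob2_232_lt (hy : NoAdjacentOnes y) (hne : (ones y).Nonempty)
    (hsparse : 2 * (ones y).card < N) :
    (ones (glob2 (ecaRule 232) y)).card < (ones y).card := by
  refine (card_ones_glob2_232_le hy).lt_of_ne fun hcard => ?_
  have := half_le_card_of_sub_two_mem hne fun _ => sub_two_mem_ones_of_card_eq hy hcard
  omega

lemma eq_zero_of_ones_eq_empty (h : ones y = ∅) : y = fun _ => 0 := by
  funext i
  have hi : y i ≠ 1 := fun hi => eq_empty_iff_forall_notMem.1 h i (by simp [ones, hi])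
  generalize y i = v at hi
  revert v; decide

lemma iterate_glob2_232_eq_zero (k : ℕ) (y : ZMod N → Fin 2) (hy : NoAdjacentOnes y)
    (hsparse : 2 * (ones y).card < N) (hk : (ones y).card ≤ k) :
    (glob2 (ecaRule 232))^[k] y = fun _ => 0 := by
  induction k generalizing y with
  | zero => exact eq_zero_of_ones_eq_empty (card_eq_zero.1 (Nat.le_zero.1 hk))
  | succ k ih =>
    obtain hempty | hne := (ones y).eq_empty_or_nonempty
    · rw [eq_zero_of_ones_eq_empty hempty]
      exact iterate_fixed (funext fun _ => (by decide : ecaRule 232 0 0 0 = 0)) _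
    · have hlt := card_ones_glob2_232_lt hy hne hsparse
      exact ih _ hy.glob2_232 (by omega) (by omega)

end Card

end Majority

section Traffic

def slope (v : Fin 2) : ℤ := 1 - 2 * v.val

def height (x : ZMod N → Fin 2) (i₀ : ZMod N) (m : ℕ) : ℤ :=
  ∑ k ∈ range m, slope (x (i₀ + k))

variable (x : ZMod N → Fin 2) (i₀ : ZMod N)

@[simp]
lemma height_zero : height x i₀ 0 = 0 := rfl

lemma height_succ (m : ℕ) : height x i₀ (m + 1) = height x i₀ m + slope (x (i₀ + m)) :=
  sum_range_succ _ _

lemma height_two : height x i₀ 2 = slope (x i₀) + slope (x (i₀ + 1)) := by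
  simp [height, sum_range_succ]

lemma height_add_le (a d : ℕ) : height x i₀ (a + d) ≤ height x i₀ a + d := by
  induction d with
  | zero => simp
  | succ d ih =>
    have hslope : slope (x (i₀ + (a + d : ℕ))) ≤ 1 := by simp [slope]
    rw [← add_assoc, height_succ]
    push_cast at hslope ⊢
    linarith

lemma height_card [NeZero N] : height x i₀ N = N - 2 * ((∑ j, (x j).val : ℕ) : ℤ) := by
  rw [height, sum_range_natCast fun j => slope (x (i₀ + j)),
    Fintype.sum_equiv (Equiv.addLeft i₀) (fun j => slope (x (i₀ + j))) (fun j => slope (x j))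
      fun _ => rfl]
  simp [slope, sum_sub_distrib, mul_sum]

lemma height_glob2_184 (m : ℕ) :
    height (glob2 (ecaRule 184) x) (i₀ + 1) m
      = min (height x i₀ m) (height x i₀ (m + 2))
        - min (height x i₀ 0) (height x i₀ 2) := by
  induction m with
  | zero => simp
  | succ m ih =>
    have local_rule : ∀ (a b c : Fin 2) (u : ℤ),
        min (u + slope a) (u + slope a + slope b + slope c) - min u (u + slope a + slope b)
          = slope (ecaRule 184 a b c) := by
      intro a b c u
      fin_cases a <;> fin_cases b <;> fin_cases c <;> simp [slope, ecaRule]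
      omega
    have hcell : glob2 (ecaRule 184) x (i₀ + 1 + m)
        = ecaRule 184 (x (i₀ + m)) (x (i₀ + (m + 1 : ℕ))) (x (i₀ + (m + 2 : ℕ))) := by
      simp only [glob2]
      congr 2 <;> (push_cast; ring)
    have h :=
      local_rule (x (i₀ + m)) (x (i₀ + (m + 1 : ℕ))) (x (i₀ + (m + 2 : ℕ))) (height x i₀ m)
    rw [height_succ, ih, hcell, ← h, height_succ, show m + 1 + 2 = m + 2 + 1 by ring,
      height_succ x i₀ (m + 2), height_succ x i₀ (m + 1), height_succ x i₀ m]
    ring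

def windowMin (H : ℕ → ℤ) : ℕ → ℕ → ℤ
  | 0, m => H m
  | t + 1, m => min (H m) (windowMin H t (m + 2))

lemma windowMin_succ' (H : ℕ → ℤ) (t m : ℕ) :
    windowMin H (t + 1) m = min (windowMin H t m) (H (m + 2 * (t + 1))) := by
  induction t generalizing m with
  | zero => rfl
  | succ t ih =>
    rw [windowMin, ih, windowMin, min_assoc,
      show m + 2 + 2 * (t + 1) = m + 2 * (t + 1 + 1) by ring]

lemma min_windowMin (H : ℕ → ℤ) (t m : ℕ) :
    min (windowMin H t m) (windowMin H t (m + 2)) = windowMin H (t + 1) m := by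
  induction t generalizing m with
  | zero => rfl
  | succ t ih =>
    have hm : windowMin H (t + 1) m = min (H m) (windowMin H t (m + 2)) := rfl
    have hm' : windowMin H (t + 1 + 1) m = min (H m) (windowMin H (t + 1) (m + 2)) := rfl
    rw [hm, hm', ← ih (m + 2)]
    omega

lemma le_sub_two_of_windowMin_two_eq {H : ℕ → ℤ} {t : ℕ}
    (h : windowMin H t 2 = windowMin H t 0 - 2) : H (2 * t + 2) ≤ H 0 - 2 := by
  cases t with
  | zero => exact h.le
  | succ s =>
    rw [windowMin_succ', windowMin, zero_add, show 2 + 2 * (s + 1) = 2 * (s + 1) + 2 by ring] at h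
    omega

lemma height_iterate_glob2_184 (t m : ℕ) :
    height ((glob2 (ecaRule 184))^[t] x) (i₀ + t) m
      = windowMin (height x i₀) t m - windowMin (height x i₀) t 0 := by
  induction t generalizing m with
  | zero => simp [windowMin]
  | succ t ih =>
    rw [iterate_succ_apply', Nat.cast_succ, ← add_assoc, height_glob2_184, ih, ih, ih, ih,
      ← min_windowMin, ← min_windowMin, zero_add]
    omega

lemma noAdjacentOnes_iterate_glob2_184 [NeZero N] (hN : 2 ≤ N)
    (hsparse : 2 * ∑ j, (x j).val < N) :
    NoAdjacentOnes ((glob2 (ecaRule 184))^[(N - 2) / 2] x) := by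
  rintro i ⟨hi, hi'⟩
  set t := (N - 2) / 2
  have hwindow : windowMin (height x (i - t)) t 2 = windowMin (height x (i - t)) t 0 - 2 := by
    have h := height_iterate_glob2_184 x (i - t) t 2
    rw [sub_add_cancel, height_two, hi, hi'] at h
    simp only [slope] at h
    omega
  have hdrop := le_sub_two_of_windowMin_two_eq hwindow
  have hrest := height_add_le x (i - t) (2 * t + 2) (N - (2 * t + 2))
  rw [Nat.add_sub_cancel' (by omega), height_card] at hrest
  simp only [height_zero] at hdrop
  omega

lemma sum_val_glob2_184 [NeZero N] :
    ∑ i, (glob2 (ecaRule 184) x i).val = ∑ i, (x i).val := by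
  have local_rule : ∀ a b c : Fin 2,
      (ecaRule 184 a b c).val = a.val * (1 - b.val) + b.val * c.val := by decide
  have hshift :
      ∑ i, (x (i - 1)).val * (1 - (x i).val) = ∑ i, (x i).val * (1 - (x (i + 1)).val) :=
    Fintype.sum_equiv (Equiv.subRight 1) _ _ fun i => by simp
  simp only [glob2, local_rule]
  rw [sum_add_distrib, hshift, ← sum_add_distrib]
  refine sum_congr rfl fun i _ => ?_
  have := (x (i + 1)).isLt
  interval_cases (x (i + 1)).val <;> simp

lemma sum_val_iterate_glob2_184 [NeZero N] (t : ℕ) :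
    ∑ i, ((glob2 (ecaRule 184))^[t] x i).val = ∑ i, (x i).val := by
  induction t with
  | zero => rfl
  | succ t ih => rw [iterate_succ_apply', sum_val_glob2_184, ih]

end Traffic

variable [NeZero N]

theorem iterate_glob2_232_iterate_glob2_184_eq_zero (hN : 2 ≤ N) (x : ZMod N → Fin 2)
    (hsparse : 2 * ∑ i, (x i).val < N) :
    (glob2 (ecaRule 232))^[(N - 1) / 2] ((glob2 (ecaRule 184))^[(N - 2) / 2] x) = fun _ => 0 := by
  have hcard : (ones ((glob2 (ecaRule 184))^[(N - 2) / 2] x)).card = ∑ i, (x i).val := by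
    rw [card_ones, sum_val_iterate_glob2_184]
  exact iterate_glob2_232_eq_zero _ _ (noAdjacentOnes_iterate_glob2_184 x hN hsparse)
    (by omega) (by omega)

theorem iterate_glob2_232_iterate_glob2_184_eq_one (hN : 2 ≤ N) (x : ZMod N → Fin 2)
    (hdense : N < 2 * ∑ i, (x i).val) :
    (glob2 (ecaRule 232))^[(N - 1) / 2] ((glob2 (ecaRule 184))^[(N - 2) / 2] x) = fun _ => 1 := by
  have h := iterate_glob2_232_iterate_glob2_184_eq_zero hN (flipReflect x)
    (by have := sum_val_flipReflect_add x; omega)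
  rw [iterate_glob2_flipReflect ecaRule_184_rev, iterate_glob2_flipReflect ecaRule_232_rev] at h
  exact (flipReflect_involutive _).symm.trans
    ((congrArg flipReflect h).trans (flipReflect_const 0))

end DensityClassification

/-- The pair of elementary rules 184 and 232 solves the binary density
classification problem, with `n = ⌊(L-2)/2⌋` iterations of rule 184 followed by
`m = ⌊(L-1)/2⌋` iterations of rule 232. -/
theorem rules_184_232_classify_density (L : ℕ) (x : ZMod (L + 3) → Fin 2) :
    (2 * (∑ i, (x i).val) < L + 3 →
      (glob2 (ecaRule 232))^[(L + 3 - 1) / 2] ((glob2 (ecaRule 184))^[(L + 3 - 2) / 2] x) =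
        fun _ => 0) ∧
    (L + 3 < 2 * (∑ i, (x i).val) →
      (glob2 (ecaRule 232))^[(L + 3 - 1) / 2] ((glob2 (ecaRule 184))^[(L + 3 - 2) / 2] x) =
        fun _ => 1) :=
  ⟨DensityClassification.iterate_glob2_232_iterate_glob2_184_eq_zero (by omega) x,
    DensityClassification.iterate_glob2_232_iterate_glob2_184_eq_one (by omega) x⟩
end

section
/- There are exactly 5 number-conserving elementary CA rules, namely those with Wolfram numbers 170, 184, 204, 226, and 240. -/
/-! A rule conserves the number of 1's as soon as `g(a,b,c) - a = F(b,c) - F(a,b)` for some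
flux `F`, because the flux terms telescope around the cycle. Conversely, conservation on the
sixteen cyclic configurations of length 4 already forces this Hattori–Takesue condition with
`F(a,b) = g(0,a,b) + g(0,0,a)` (length 3 does not: rule 172 conserves on them), and the
condition is a finite check singling out the five rules. -/

def flux2 (g : Rule2) (a b : Fin 2) : ℕ := (g 0 a b).val + (g 0 0 a).val

def HattoriTakesue (g : Rule2) : Prop :=
  ∀ a b c : Fin 2, (g a b c).val + flux2 g a b = a.val + flux2 g b c

instance (g : Rule2) : Decidable (HattoriTakesue g) := by
  unfold HattoriTakesue; infer_instance

theorem sum_glob2_val_eq_of_flux {n : ℕ} [NeZero n] (g : Rule2) (F : Fin 2 → Fin 2 → ℕ)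
    (hF : ∀ a b c : Fin 2, (g a b c).val + F a b = a.val + F b c) (x : ZMod n → Fin 2) :
    ∑ i, (glob2 g x i).val = ∑ i, (x i).val := by
  have key : ∑ i, ((glob2 g x i).val + F (x (i - 1)) (x i))
      = ∑ i, ((x (i - 1)).val + F (x i) (x (i + 1))) :=
    Finset.sum_congr rfl fun i _ => hF _ _ _
  have hflux : ∑ i, F (x (i - 1)) (x i) = ∑ i, F (x i) (x (i + 1)) := by
    simpa using (Equiv.subRight (1 : ZMod n)).sum_comp fun i => F (x i) (x (i + 1))
  have hx : ∑ i, (x (i - 1)).val = ∑ i, (x i).val :=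
    (Equiv.subRight (1 : ZMod n)).sum_comp fun i => (x i).val
  rw [Finset.sum_add_distrib, Finset.sum_add_distrib, hflux, hx] at key
  exact Nat.add_right_cancel key

theorem numConserving2_of_hattoriTakesue {g : Rule2} (h : HattoriTakesue g) :
    numConserving2 g :=
  fun _ => sum_glob2_val_eq_of_flux g (flux2 g) h

theorem hattoriTakesue_of_conserves_length_four (g : Rule2)
    (h : ∀ x : ZMod 4 → Fin 2, ∑ i, (glob2 g x i).val = ∑ i, (x i).val) :
    HattoriTakesue g := by
  revert g; decide +kernel

theorem numConserving2_iff_hattoriTakesue (g : Rule2) :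
    numConserving2 g ↔ HattoriTakesue g :=
  ⟨fun h => hattoriTakesue_of_conserves_length_four g (h 1), numConserving2_of_hattoriTakesue⟩

theorem hattoriTakesue_iff_wolfram2_mem (g : Rule2) :
    HattoriTakesue g ↔ wolfram2 g ∈ ({170, 184, 204, 226, 240} : Finset ℕ) := by
  revert g; decide +kernel

/-- There are exactly 5 number-conserving elementary CA rules, namely
those with Wolfram numbers 170, 184, 204, 226 and 240. -/
theorem number_conserving_eca_iff (g : Rule2) :
    numConserving2 g ↔ wolfram2 g ∈ ({170, 184, 204, 226, 240} : Set ℕ) := by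
  rw [numConserving2_iff_hattoriTakesue, hattoriTakesue_iff_wolfram2_mem, ← Finset.mem_coe]
  simp
end

section
/- There exists no pair of ternary nearest-neighbour rules (f, g) solving the simple-majority ternary density classification problem such that f is all-conserving and g is reducible to two states. In particular, any all-conserving f satisfies: each of its three binary projections f|_{01}, f|_{02}, f|_{12} is one of the elementary rules 170, 184, 204, 226, 240, and no all-conserving rule has all three projections lying in {184, 226}. -/
/-- The pair `(f, g)` solves the simple-majority ternary density classification
problem: whenever symbol `k` forms a strict majority, iterating `f` then `g`
(suitable numbers of times depending on the length) yields the constant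
configuration `k`. -/
def solvesSimpleMajority (f g : Rule3) : Prop :=
  ∃ m n : ℕ → ℕ, ∀ L : ℕ, ∀ x : ZMod (L + 3) → Fin 3, ∀ k : Fin 3,
    (∀ j : Fin 3, j ≠ k → count3 x j < count3 x k) →
    (glob3 g)^[m L] ((glob3 f)^[n L] x) = fun _ => k

/-!
An all-conserving rule cannot create a symbol absent from a neighbourhood (the count of that
symbol is conserved and nonnegative), so each binary projection exists, and it conserves the
number of ones, hence is one of the elementary rules 170, 184, 204, 226, 240. The four-cell
balance equations rule out all three projections being traffic rules 184 or 226, so some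
projection of `f` is a translation 170, 204 or 240. On configurations over that pair of symbols
the iterates of `f` are translations, commuting with `g`, which acts there as a single elementary
rule; but no elementary rule classifies majority: for each of the 256 rules some small majority
configuration has an eventually periodic orbit that never becomes uniform.
-/

open Finset Function

section CyclicSums

variable {α M : Type*} [AddCommMonoid M]

theorem sum_three_cells_eq (r : α → α → α → α) (φ : α → M)
    (h : ∀ x : ZMod 3 → α, ∑ i, φ (r (x (i - 1)) (x i) (x (i + 1))) = ∑ i, φ (x i))
    (a b c : α) : φ (r c a b) + φ (r a b c) + φ (r b c a) = φ a + φ b + φ c :=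
  (Fin.sum_univ_three _).symm.trans ((h ![a, b, c]).trans (Fin.sum_univ_three _))

theorem sum_four_cells_eq (r : α → α → α → α) (φ : α → M)
    (h : ∀ x : ZMod 4 → α, ∑ i, φ (r (x (i - 1)) (x i) (x (i + 1))) = ∑ i, φ (x i))
    (a b c d : α) :
    φ (r d a b) + φ (r a b c) + φ (r b c d) + φ (r c d a) = φ a + φ b + φ c + φ d :=
  (Fin.sum_univ_four _).symm.trans ((h ![a, b, c, d]).trans (Fin.sum_univ_four _))

end CyclicSums

section Projections

variable (f : Rule3) (e : Fin 2 → Fin 3)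

theorem exists_projection_of_conserves {ψ : Fin 3 → ℤ} (hf : conserves3 f ψ)
    (hψ : ∀ v, 0 ≤ ψ v) (he : ∀ b, ψ (e b) = 0) (hzero : ∀ v, ψ v = 0 → ∃ b, e b = v) :
    ∃ h : Rule2, ∀ a b c, f (e a) (e b) (e c) = e (h a b c) := by
  have key : ∀ a b c, ∃ d, e d = f (e a) (e b) (e c) := by
    intro a b c
    have balance := sum_three_cells_eq f ψ (hf 0) (e a) (e b) (e c)
    refine hzero _ (le_antisymm ?_ (hψ _))
    linarith [he a, he b, he c, hψ (f (e c) (e a) (e b)), hψ (f (e b) (e c) (e a))]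
  choose h hh using key
  exact ⟨h, fun a b c => (hh a b c).symm⟩

theorem numConserving2_of_projection {ψ : Fin 3 → ℤ} (hf : conserves3 f ψ)
    (he : ∀ b, ψ (e b) = b.val) {h : Rule2} (hfh : ∀ a b c, f (e a) (e b) (e c) = e (h a b c)) :
    numConserving2 h := by
  intro L y
  have key := hf L (e ∘ y)
  simp only [glob3, comp_apply, hfh, he] at key
  exact_mod_cast key

end Projections

theorem wolfram2_of_cyclic_balance : ∀ h : Rule2,
    (∀ a b c : Fin 2, (h c a b).val + (h a b c).val + (h b c a).val = a.val + b.val + c.val) →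
    (∀ a b c d : Fin 2, (h d a b).val + (h a b c).val + (h b c d).val + (h c d a).val =
      a.val + b.val + c.val + d.val) →
    wolfram2 h = 170 ∨ wolfram2 h = 184 ∨ wolfram2 h = 204 ∨ wolfram2 h = 226 ∨
      wolfram2 h = 240 := by
  decide +kernel

theorem wolfram2_mem_of_numConserving2 {h : Rule2} (hh : numConserving2 h) :
    wolfram2 h ∈ ({170, 184, 204, 226, 240} : Set ℕ) :=
  wolfram2_of_cyclic_balance h (sum_three_cells_eq h Fin.val (hh 0))
    (sum_four_cells_eq h Fin.val (hh 1))

theorem exists_projection_wolfram2_mem {f : Rule3} (e : Fin 2 → Fin 3) {ψ χ : Fin 3 → ℤ}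
    (hψf : conserves3 f ψ) (hψ : ∀ v, 0 ≤ ψ v) (hψe : ∀ b, ψ (e b) = 0)
    (hψzero : ∀ v, ψ v = 0 → ∃ b, e b = v) (hχf : conserves3 f χ) (hχe : ∀ b, χ (e b) = b.val) :
    ∃ h : Rule2, (∀ a b c, f (e a) (e b) (e c) = e (h a b c)) ∧
      wolfram2 h ∈ ({170, 184, 204, 226, 240} : Set ℕ) := by
  obtain ⟨h, hfh⟩ := exists_projection_of_conserves f e hψf hψ hψe hψzero
  exact ⟨h, hfh, wolfram2_mem_of_numConserving2 (numConserving2_of_projection f e hχf hχe hfh)⟩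

theorem allConserving3.projections {f : Rule3} (hf : allConserving3 f) :
    (∃ h, agrees01 f h ∧ wolfram2 h ∈ ({170, 184, 204, 226, 240} : Set ℕ)) ∧
    (∃ h, agrees02 f h ∧ wolfram2 h ∈ ({170, 184, 204, 226, 240} : Set ℕ)) ∧
    (∃ h, agrees12 f h ∧ wolfram2 h ∈ ({170, 184, 204, 226, 240} : Set ℕ)) := by
  obtain ⟨h0, h1, h2⟩ := hf
  exact ⟨exists_projection_wolfram2_mem i01 h2 (by decide) (by decide) (by decide) h1 (by decide),
    exists_projection_wolfram2_mem i02 h1 (by decide) (by decide) (by decide) h2 (by decide),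
    exists_projection_wolfram2_mem i12 h0 (by decide) (by decide) (by decide) h2 (by decide)⟩

theorem ecaRule_wolfram2 : ∀ h : Rule2, ecaRule (wolfram2 h) = h := by
  decide +kernel

/-- The balance of the counts of `0`, `0`, `1`, `1`, `2`, `2` on the cyclic words `0012`, `0021`,
`0112`, `0211`, `0122`, `0221`. Their neighbourhoods are binary except for the permutations
`012`, `021`, `102`, `120`, `201`, `210` of the symbols, whose images are `u₀, …, u₅`. -/
theorem traffic_balance_inconsistent :
    ∀ h₁ ∈ [ecaRule 184, ecaRule 226], ∀ h₂ ∈ [ecaRule 184, ecaRule 226],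
    ∀ h₃ ∈ [ecaRule 184, ecaRule 226], ∀ u₀ u₁ u₂ u₃ u₄ u₅ : Fin 3,
    ¬ (Ψ0 (i02 (h₂ 1 0 0)) + Ψ0 (i01 (h₁ 0 0 1)) + Ψ0 u₀ + Ψ0 u₃ = 2 ∧
       Ψ0 (i01 (h₁ 1 0 0)) + Ψ0 (i02 (h₂ 0 0 1)) + Ψ0 u₁ + Ψ0 u₅ = 2 ∧
       Ψ1 u₄ + Ψ1 (i01 (h₁ 0 1 1)) + Ψ1 (i12 (h₃ 0 0 1)) + Ψ1 u₃ = 2 ∧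
       Ψ1 u₂ + Ψ1 u₁ + Ψ1 (i12 (h₃ 1 0 0)) + Ψ1 (i01 (h₁ 1 1 0)) = 2 ∧
       Ψ2 u₄ + Ψ2 u₀ + Ψ2 (i12 (h₃ 0 1 1)) + Ψ2 (i02 (h₂ 1 1 0)) = 2 ∧
       Ψ2 u₂ + Ψ2 (i02 (h₂ 0 1 1)) + Ψ2 (i12 (h₃ 1 1 0)) + Ψ2 u₅ = 2) := by
  decide +kernel

theorem mem_traffic_of_wolfram2 {h : Rule2} (hh : wolfram2 h = 184 ∨ wolfram2 h = 226) :
    h ∈ [ecaRule 184, ecaRule 226] := by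
  rw [← ecaRule_wolfram2 h]
  rcases hh with hh | hh <;> simp [hh]

theorem not_allConserving3_of_traffic_projections : ¬ ∃ f : Rule3, allConserving3 f ∧
    (∃ h, agrees01 f h ∧ (wolfram2 h = 184 ∨ wolfram2 h = 226)) ∧
    (∃ h, agrees02 f h ∧ (wolfram2 h = 184 ∨ wolfram2 h = 226)) ∧
    (∃ h, agrees12 f h ∧ (wolfram2 h = 184 ∨ wolfram2 h = 226)) := by
  rintro ⟨f, ⟨h0, h1, h2⟩, ⟨p₁, hp₁, hw₁⟩, ⟨p₂, hp₂, hw₂⟩, ⟨p₃, hp₃, hw₃⟩⟩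
  refine traffic_balance_inconsistent p₁ (mem_traffic_of_wolfram2 hw₁) p₂
    (mem_traffic_of_wolfram2 hw₂) p₃ (mem_traffic_of_wolfram2 hw₃)
    (f 0 1 2) (f 0 2 1) (f 1 0 2) (f 1 2 0) (f 2 0 1) (f 2 1 0) ⟨?_, ?_, ?_, ?_, ?_, ?_⟩
  · rw [← hp₂ 1 0 0, ← hp₁ 0 0 1]
    exact (sum_four_cells_eq f Ψ0 (h0 1) 0 0 1 2).trans (by decide)
  · rw [← hp₁ 1 0 0, ← hp₂ 0 0 1]
    exact (sum_four_cells_eq f Ψ0 (h0 1) 0 0 2 1).trans (by decide)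
  · rw [← hp₁ 0 1 1, ← hp₃ 0 0 1]
    exact (sum_four_cells_eq f Ψ1 (h1 1) 0 1 1 2).trans (by decide)
  · rw [← hp₃ 1 0 0, ← hp₁ 1 1 0]
    exact (sum_four_cells_eq f Ψ1 (h1 1) 0 2 1 1).trans (by decide)
  · rw [← hp₃ 0 1 1, ← hp₂ 1 1 0]
    exact (sum_four_cells_eq f Ψ2 (h2 1) 0 1 2 2).trans (by decide)
  · rw [← hp₂ 0 1 1, ← hp₃ 1 1 0]
    exact (sum_four_cells_eq f Ψ2 (h2 1) 0 2 2 1).trans (by decide)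

theorem forall_iterate_of_iterate_eq {α : Type*} {F : α → α} {a : α} {P : α → Prop} {N p : ℕ}
    (hp : p < N) (hN : F^[N] a = F^[p] a) (hP : ∀ t < N, P (F^[t] a)) (t : ℕ) : P (F^[t] a) := by
  induction t using Nat.strong_induction_on with
  | _ t ih =>
    rcases lt_or_ge t N with ht | ht
    · exact hP t ht
    · have hshift : F^[t] a = F^[t - (N - p)] a := by
        obtain ⟨s, rfl⟩ := Nat.exists_eq_add_of_le ht
        rw [show N + s - (N - p) = s + p by omega, add_comm N, iterate_add_apply, hN,
          ← iterate_add_apply]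
      rw [hshift]
      exact ih _ (by omega)

section BinaryCodes

/-- Coding configurations by the bits of a natural number lets the kernel iterate a rule on them
without recomputing earlier steps. -/
def decode (n m : ℕ) : ZMod (n + 3) → Fin 2 := fun i => if m.testBit i.val then 1 else 0

def encode {n : ℕ} (y : ZMod (n + 3) → Fin 2) : ℕ := Nat.ofBits fun i => y i = 1

theorem decode_encode {n : ℕ} (y : ZMod (n + 3) → Fin 2) : decode n (encode y) = y := by
  funext i
  have hbit : (encode y).testBit i.val = decide (y i = 1) := Nat.testBit_ofBits_lt _ _ i.isLt
  simp only [decode, hbit]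
  generalize y i = b
  revert b
  decide

def stepCode (h : Rule2) (n m : ℕ) : ℕ := encode (glob2 h (decode n m))

theorem decode_iterate_stepCode (h : Rule2) (n m t : ℕ) :
    decode n ((stepCode h n)^[t] m) = (glob2 h)^[t] (decode n m) :=
  Semiconj.iterate_right (f := decode n) (fun _ => decode_encode _) t m

end BinaryCodes

section SingleRule

abbrev IsStrictMajority {ι : Type*} [Fintype ι] (y : ι → Fin 2) (k : Fin 2) : Prop :=
  (univ.filter fun i => y i ≠ k).card < (univ.filter fun i => y i = k).card

structure CodedConfig where
  n : ℕ
  k : Fin 2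
  code : ℕ

/-- The configurations `100`, `110`, `1000`, `1110`, `11000`, `11100`, `1000000`. -/
def smallMajorityConfigs : List CodedConfig :=
  [⟨0, 0, 1⟩, ⟨0, 1, 3⟩, ⟨1, 0, 1⟩, ⟨1, 1, 7⟩, ⟨2, 0, 3⟩, ⟨2, 1, 7⟩, ⟨4, 0, 1⟩]

theorem smallMajorityConfigs_isStrictMajority :
    ∀ c ∈ smallMajorityConfigs, IsStrictMajority (decode c.n c.code) c.k := by
  decide

theorem exists_smallMajorityConfig_orbit_avoids_uniform :
    ∀ h : Rule2, ∃ c ∈ smallMajorityConfigs,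
    (∃ p < 8, (stepCode h c.n)^[8] c.code = (stepCode h c.n)^[p] c.code) ∧
    ∀ t < 8, decode c.n ((stepCode h c.n)^[t] c.code) ≠ fun _ => c.k := by
  decide +kernel

theorem exists_isStrictMajority_iterate_ne (h : Rule2) :
    ∃ (n : ℕ) (y : ZMod (n + 3) → Fin 2) (k : Fin 2),
      IsStrictMajority y k ∧ ∀ t, (glob2 h)^[t] y ≠ fun _ => k := by
  obtain ⟨c, hc, ⟨p, hp, hperiod⟩, havoid⟩ := exists_smallMajorityConfig_orbit_avoids_uniform h
  refine ⟨c.n, decode c.n c.code, c.k, smallMajorityConfigs_isStrictMajority c hc, fun t => ?_⟩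
  rw [← decode_iterate_stepCode]
  exact forall_iterate_of_iterate_eq (P := (decode c.n · ≠ fun _ => c.k)) hp hperiod havoid t

end SingleRule

section Translations

variable {n : ℕ}

theorem glob2_comp_add (h : Rule2) (s : ZMod n) (y : ZMod n → Fin 2) :
    glob2 h (fun i => y (i + s)) = fun i => glob2 h y (i + s) := by
  funext i
  simp only [glob2, sub_add_eq_add_sub, add_right_comm]

theorem iterate_glob2_comp_add (h : Rule2) (s : ZMod n) (t : ℕ) (y : ZMod n → Fin 2) :
    (glob2 h)^[t] (fun i => y (i + s)) = fun i => (glob2 h)^[t] y (i + s) :=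
  Commute.iterate_left (f := glob2 h) (g := fun y i => y (i + s)) (glob2_comp_add h s) t y

theorem iterate_eq_comp_add {F : (ZMod n → Fin 2) → ZMod n → Fin 2} {s : ZMod n}
    (hF : ∀ y, F y = fun i => y (i + s)) (t : ℕ) (y : ZMod n → Fin 2) :
    F^[t] y = fun i => y (i + t • s) := by
  induction t with
  | zero => simp
  | succ t ih =>
    funext i
    simp only [iterate_succ_apply', ih, hF, succ_nsmul, add_assoc, add_comm s]

theorem exists_translation_of_wolfram2 {h : Rule2}
    (hw : wolfram2 h = 170 ∨ wolfram2 h = 204 ∨ wolfram2 h = 240) :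
    ∃ s : ℤ, ∀ {n : ℕ} (y : ZMod n → Fin 2), glob2 h y = fun i => y (i + s) := by
  rw [← ecaRule_wolfram2 h]
  rcases hw with hw | hw | hw <;> rw [hw]
  · have h170 : ∀ a b c : Fin 2, ecaRule 170 a b c = c := by decide
    exact ⟨1, fun y => funext fun i => by simp [glob2, h170]⟩
  · have h204 : ∀ a b c : Fin 2, ecaRule 204 a b c = b := by decide
    exact ⟨0, fun y => funext fun i => by simp [glob2, h204]⟩
  · have h240 : ∀ a b c : Fin 2, ecaRule 240 a b c = a := by decide
    exact ⟨-1, fun y => funext fun i => by simp [glob2, h240, sub_eq_add_neg]⟩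

end Translations

section Embedding

variable {f : Rule3} {e : Fin 2 → Fin 3} {p : Rule2}

theorem iterate_glob3_comp (hfp : ∀ a b c, f (e a) (e b) (e c) = e (p a b c)) {n : ℕ} (t : ℕ)
    (y : ZMod n → Fin 2) : (glob3 f)^[t] (e ∘ y) = e ∘ (glob2 p)^[t] y :=
  (Semiconj.iterate_right (f := (e ∘ ·)) (ga := glob2 p) (gb := glob3 f)
    (fun y => funext fun i => (hfp (y (i - 1)) (y i) (y (i + 1))).symm) t y).symm

theorem count3_comp_lt_of_isStrictMajority (he : Injective e) {n : ℕ} [NeZero n]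
    {y : ZMod n → Fin 2} {k : Fin 2} (hy : IsStrictMajority y k) :
    ∀ j, j ≠ e k → count3 (e ∘ y) j < count3 (e ∘ y) (e k) := by
  intro j hj
  have hk : count3 (e ∘ y) (e k) = (univ.filter fun i => y i = k).card := by
    simp [count3, he.eq_iff]
  have hj : count3 (e ∘ y) j ≤ (univ.filter fun i => y i ≠ k).card := by
    refine card_le_card fun i hi => ?_
    simp only [mem_filter, mem_univ, true_and, comp_apply] at hi ⊢
    rintro rfl
    exact hj hi.symm
  omega

theorem not_solvesSimpleMajority_of_translation {g : Rule3} {q : Rule2} (he : Injective e)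
    (hfp : ∀ a b c, f (e a) (e b) (e c) = e (p a b c))
    (hgq : ∀ a b c, g (e a) (e b) (e c) = e (q a b c)) {s : ℤ}
    (hp : ∀ {n : ℕ} (y : ZMod n → Fin 2), glob2 p y = fun i => y (i + s)) :
    ¬ solvesSimpleMajority f g := by
  rintro ⟨m, n, hsol⟩
  obtain ⟨L, y, k, hmaj, hne⟩ := exists_isStrictMajority_iterate_ne q
  have hk := hsol L (e ∘ y) (e k) (count3_comp_lt_of_isStrictMajority he hmaj)
  rw [iterate_glob3_comp hfp, iterate_eq_comp_add hp, iterate_glob3_comp hgq,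
    iterate_glob2_comp_add] at hk
  refine hne (m L) (funext fun i => he ?_)
  simpa using congrFun hk (i - n L • (s : ZMod (L + 3)))

theorem wolfram2_traffic_of_solvesSimpleMajority {g : Rule3} {q : Rule2} (he : Injective e)
    (hfp : ∀ a b c, f (e a) (e b) (e c) = e (p a b c))
    (hgq : ∀ a b c, g (e a) (e b) (e c) = e (q a b c))
    (hw : wolfram2 p ∈ ({170, 184, 204, 226, 240} : Set ℕ)) (hsol : solvesSimpleMajority f g) :
    wolfram2 p = 184 ∨ wolfram2 p = 226 := by
  simp only [Set.mem_insert_iff, Set.mem_singleton_iff] at hw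
  by_contra htraffic
  obtain ⟨s, hs⟩ := exists_translation_of_wolfram2 (h := p) (by omega)
  exact not_solvesSimpleMajority_of_translation he hfp hgq hs hsol

end Embedding

theorem no_simple_majority_solution :
    (¬ ∃ f g : Rule3, allConserving3 f ∧ reducible3 g ∧ solvesSimpleMajority f g) ∧
    (∀ f : Rule3, allConserving3 f →
      (∃ h, agrees01 f h ∧ wolfram2 h ∈ ({170, 184, 204, 226, 240} : Set ℕ)) ∧
      (∃ h, agrees02 f h ∧ wolfram2 h ∈ ({170, 184, 204, 226, 240} : Set ℕ)) ∧
      (∃ h, agrees12 f h ∧ wolfram2 h ∈ ({170, 184, 204, 226, 240} : Set ℕ))) ∧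
    (¬ ∃ f : Rule3, allConserving3 f ∧
      (∃ h, agrees01 f h ∧ (wolfram2 h = 184 ∨ wolfram2 h = 226)) ∧
      (∃ h, agrees02 f h ∧ (wolfram2 h = 184 ∨ wolfram2 h = 226)) ∧
      (∃ h, agrees12 f h ∧ (wolfram2 h = 184 ∨ wolfram2 h = 226))) := by
  refine ⟨?_, fun f hf => hf.projections, not_allConserving3_of_traffic_projections⟩
  rintro ⟨f, g, hf, ⟨⟨q₁, hq₁⟩, ⟨q₂, hq₂⟩, ⟨q₃, hq₃⟩⟩, hsol⟩
  obtain ⟨⟨p₁, hp₁, hw₁⟩, ⟨p₂, hp₂, hw₂⟩, ⟨p₃, hp₃, hw₃⟩⟩ := hf.projections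
  have hi₁ : Injective i01 := by decide
  have hi₂ : Injective i02 := by decide
  have hi₃ : Injective i12 := by decide
  exact not_allConserving3_of_traffic_projections ⟨f, hf,
    ⟨p₁, hp₁, wolfram2_traffic_of_solvesSimpleMajority hi₁ hp₁ hq₁ hw₁ hsol⟩,
    ⟨p₂, hp₂, wolfram2_traffic_of_solvesSimpleMajority hi₂ hp₂ hq₂ hw₂ hsol⟩,
    ⟨p₃, hp₃, wolfram2_traffic_of_solvesSimpleMajority hi₃ hp₃ hq₃ hw₃ hsol⟩⟩
end

section
/- If a ternary rule f: {0,1,2}^3 → {0,1,2} is all-conserving and its binary projection f|_{01} exists, then f|_{01} is a number-conserving elementary CA rule (i.e., one of rules 170, 184, 204, 226, 240). -/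
/-! `i01` turns a `{0,1}`-configuration into a ternary one whose `Ψ1`-weight is its number
of 1's, so conservation of 1's under `f` is number conservation of `f|_{01}`. Number conservation
on the six cyclic words `000`, `111`, `100`, `110`, `1100`, `1010` alone already leaves only the
five listed elementary rules. -/

section NumConserving

variable {g : Rule2}

lemma numConserving2.cycle3 (hg : numConserving2 g) (x : ZMod 3 → Fin 2) :
    (g (x 2) (x 0) (x 1)).val + (g (x 0) (x 1) (x 2)).val + (g (x 1) (x 2) (x 0)).val =
      (x 0).val + (x 1).val + (x 2).val :=
  (Fin.sum_univ_three _).symm.trans ((hg 0 x).trans (Fin.sum_univ_three _))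

lemma numConserving2.cycle4 (hg : numConserving2 g) (x : ZMod 4 → Fin 2) :
    (g (x 3) (x 0) (x 1)).val + (g (x 0) (x 1) (x 2)).val + (g (x 1) (x 2) (x 3)).val
        + (g (x 2) (x 3) (x 0)).val = (x 0).val + (x 1).val + (x 2).val + (x 3).val :=
  (Fin.sum_univ_four _).symm.trans ((hg 1 x).trans (Fin.sum_univ_four _))

lemma numConserving2.wolfram2_mem (hg : numConserving2 g) :
    wolfram2 g ∈ ({170, 184, 204, 226, 240} : Set ℕ) := by
  have h000 := hg.cycle3 ![0, 0, 0]
  have h111 := hg.cycle3 ![1, 1, 1]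
  have h100 := hg.cycle3 ![1, 0, 0]
  have h110 := hg.cycle3 ![1, 1, 0]
  have h1100 := hg.cycle4 ![1, 1, 0, 0]
  have h1010 := hg.cycle4 ![1, 0, 1, 0]
  simp only [Matrix.cons_val, Fin.isValue, Fin.coe_ofNat_eq_mod, Nat.zero_mod, Nat.mod_succ,
    Nat.reduceAdd] at h000 h111 h100 h110 h1100 h1010
  simp only [wolfram2, Fin.sum_univ_two, Fin.isValue, Fin.coe_ofNat_eq_mod, Nat.zero_mod,
    Nat.mod_succ, Nat.reducePow, Nat.reduceAdd, Nat.reduceMul, Set.mem_insert_iff,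
    Set.mem_singleton_iff]
  -- `110` and `1100` give `g 1 0 1 = g 1 0 0 + g 0 0 1`; fixing this bit leaves linear arithmetic.
  obtain h101 | h101 : (g 1 0 1).val = 0 ∨ (g 1 0 1).val = 1 := by omega
  all_goals omega

end NumConserving

lemma Ψ1_i01 (a : Fin 2) : Ψ1 (i01 a) = a.val := by
  fin_cases a <;> rfl

lemma glob3_comp_i01 {f : Rule3} {h : Rule2} (hp : agrees01 f h) {n : ℕ} (x : ZMod n → Fin 2) :
    glob3 f (i01 ∘ x) = i01 ∘ glob2 h x :=
  funext fun _ => hp _ _ _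

lemma numConserving2_of_conserves3_Ψ1 {f : Rule3} {h : Rule2} (hf : conserves3 f Ψ1)
    (hp : agrees01 f h) : numConserving2 h := by
  intro L x
  have hΨ := hf L (i01 ∘ x)
  simp only [glob3_comp_i01 hp, Function.comp_apply, Ψ1_i01] at hΨ
  exact_mod_cast hΨ

/-- If `f` is all-conserving and its binary projection `f|_{01}` exists (equals
the binary rule `h`), then that projection is number-conserving, i.e. one of the
elementary rules 170, 184, 204, 226, 240. -/
theorem allConserving_projection01_number_conserving (f : Rule3) (h : Rule2)
    (hf : allConserving3 f) (hp : agrees01 f h) :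
    numConserving2 h ∧ wolfram2 h ∈ ({170, 184, 204, 226, 240} : Set ℕ) := by
  have hnc := numConserving2_of_conserves3_Ψ1 hf.2.1 hp
  exact ⟨hnc, hnc.wolfram2_mem⟩
end
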